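/- arXiv:2511.10823 — 9 statements merged into one kernel-verified Lean document; each statement's English description precedes it below -/
import Mathlib

section
/- Let d ≥ 1 and n ≥ 1 be integers, let x ∈ ℤ^n, and let c ∈ [-d:d]^n be a solution vector for x. Define the set of solution pairs P(c) = {(a,b) ∈ [0:d]^n × [0:d]^n : a − b = c}. Suppose there exist two distinct solution pairs (a,b), (a',b') ∈ P(c) with a · x = a' · x. Then x admits a solution vector that is (1/(3(2d+1)))-unbalanced, i.e., there exists a nonzero c'' ∈ [-d:d]^n with c'' · x = 0 such that for some z ∈ [-d:d], |#{i : c''_i = z} − n/(2d+1)| > n/(3(2d+1)). -/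
/-!
Put `v = a - a'`. Then `v ≠ 0`, and `v`, `c + v = a - b'` and `c - v = a' - b` are solution
vectors with entries in `[-d:d]`. If every solution vector were balanced, i.e. every value `z`
occurred within `m/3` of `m = n/(2d+1)` times, then `‖c‖², ‖v‖² ≥ (2m/3) ∑ z²` while
`‖c ± v‖² < (4m/3) ∑ z²`, which contradicts the parallelogram law
`‖c + v‖² + ‖c - v‖² = 2‖c‖² + 2‖v‖²`.
-/

open Finset

section Profile

variable {ι : Type*} [Fintype ι]

def profile (t : ι → ℤ) (z : ℤ) : ℕ := #{i | t i = z}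

/-- The negation of `1/(3|C|)`-unbalanced, written with `m = n/|C|` and `εn = m/3`. -/
def IsBalanced (C : Finset ℤ) (t : ι → ℤ) : Prop :=
  ∀ z ∈ C, |(profile t z : ℝ) - Fintype.card ι / #C| ≤ Fintype.card ι / #C / 3

variable {C : Finset ℤ} {t : ι → ℤ}

theorem sum_comp_eq_sum_profile_mul (ht : ∀ i, t i ∈ C) (f : ℤ → ℝ) :
    ∑ i, f (t i) = ∑ z ∈ C, profile t z * f z := by
  rw [← sum_fiberwise_of_maps_to' (fun i _ => ht i)]
  simp only [sum_const, nsmul_eq_mul, profile]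

theorem sum_profile (ht : ∀ i, t i ∈ C) : ∑ z ∈ C, (profile t z : ℝ) = Fintype.card ι := by
  simpa using (sum_comp_eq_sum_profile_mul ht fun _ => 1).symm

theorem mul_sum_le_sum_comp (ht : ∀ i, t i ∈ C) {f : ℤ → ℝ} (hf : ∀ z ∈ C, 0 ≤ f z) {L : ℝ}
    (hL : ∀ z ∈ C, L ≤ profile t z) : L * ∑ z ∈ C, f z ≤ ∑ i, f (t i) := by
  rw [sum_comp_eq_sum_profile_mul ht, mul_sum]
  exact sum_le_sum fun z hz => mul_le_mul_of_nonneg_right (hL z hz) (hf z hz)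

theorem sum_sq_le (ht : ∀ i, t i ∈ C) (h0 : 0 ∈ C) {L M : ℝ} (hM : ∀ z ∈ C, profile t z ≤ M)
    (hL : L ≤ profile t 0) :
    ∑ i, (t i : ℝ) ^ 2 ≤ M * (∑ z ∈ C, (z : ℝ) ^ 2 - (#C - 1)) + Fintype.card ι - L := by
  have hsplit : ∑ i, (t i : ℝ) ^ 2 =
      ∑ z ∈ C.erase 0, profile t z * ((z : ℝ) ^ 2 - 1) - profile t 0 + Fintype.card ι := by
    rw [sum_comp_eq_sum_profile_mul ht fun z => (z : ℝ) ^ 2, ← sum_profile ht,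
      ← add_sum_erase C _ h0, ← add_sum_erase C _ h0]
    simp only [Int.cast_zero, mul_sub, mul_one, sum_sub_distrib]
    ring
  have hterm : ∀ z ∈ C.erase 0, profile t z * ((z : ℝ) ^ 2 - 1) ≤ M * ((z : ℝ) ^ 2 - 1) := by
    intro z hz
    have hz1 : (1 : ℝ) ≤ (z : ℝ) ^ 2 := by
      exact_mod_cast (one_le_sq_iff_one_le_abs z).2 (Int.one_le_abs (ne_of_mem_erase hz))
    exact mul_le_mul_of_nonneg_right (hM z (mem_of_mem_erase hz)) (by linarith)
  have hM_sum :
      ∑ z ∈ C.erase 0, M * ((z : ℝ) ^ 2 - 1) = M * (∑ z ∈ C, (z : ℝ) ^ 2 - (#C - 1)) := by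
    rw [← mul_sum, sum_sub_distrib, sum_erase _ (by simp), sum_const, card_erase_of_mem h0,
      nsmul_one, Nat.cast_pred (card_pos.2 ⟨0, h0⟩)]
  linarith [sum_le_sum hterm]

theorem sum_sq_pos (hC : 1 < #C) : 0 < ∑ z ∈ C, (z : ℝ) ^ 2 := by
  obtain ⟨z, hz, hz0⟩ := exists_mem_ne hC 0
  exact sum_pos' (fun _ _ => sq_nonneg _) ⟨z, hz, by positivity⟩

namespace IsBalanced

theorem mul_sum_sq_le (ht : ∀ i, t i ∈ C) (hb : IsBalanced C t) :
    2 / 3 * (Fintype.card ι / #C) * ∑ z ∈ C, (z : ℝ) ^ 2 ≤ ∑ i, (t i : ℝ) ^ 2 :=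
  mul_sum_le_sum_comp ht (fun _ _ => sq_nonneg _) fun z hz => by
    linarith [(abs_le.1 (hb z hz)).1]

/-- Strict because the `#C - 1` nonzero values cannot all occur `4m/3` times when `0` occurs at
least `2m/3` times and `#C > 2`. -/
theorem sum_sq_lt [Nonempty ι] (ht : ∀ i, t i ∈ C) (h0 : 0 ∈ C) (hC : 2 < #C)
    (hb : IsBalanced C t) :
    ∑ i, (t i : ℝ) ^ 2 < 4 / 3 * (Fintype.card ι / #C) * ∑ z ∈ C, (z : ℝ) ^ 2 := by
  set m : ℝ := Fintype.card ι / #C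
  have hm : 0 < m := by positivity
  have hcard : (Fintype.card ι : ℝ) = #C * m := by
    rw [mul_div_cancel₀ _ (by positivity)]
  have hC' : (2 : ℝ) < #C := by exact_mod_cast hC
  have := sum_sq_le ht h0 (M := 4 / 3 * m) (fun z hz => by linarith [(abs_le.1 (hb z hz)).2])
    (L := 2 / 3 * m) (by linarith [(abs_le.1 (hb 0 h0)).1])
  nlinarith

end IsBalanced

theorem sum_sq_lt_of_eq_zero_or_isBalanced [Nonempty ι] (ht : ∀ i, t i ∈ C) (h0 : 0 ∈ C)
    (hC : 2 < #C) (h : t = 0 ∨ IsBalanced C t) :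
    ∑ i, (t i : ℝ) ^ 2 < 4 / 3 * (Fintype.card ι / #C) * ∑ z ∈ C, (z : ℝ) ^ 2 := by
  rcases h with rfl | hb
  · simpa using mul_pos (by positivity) (sum_sq_pos (by omega))
  · exact hb.sum_sq_lt ht h0 hC

theorem not_isBalanced_parallelogram [Nonempty ι] (h0 : 0 ∈ C) (hC : 2 < #C) {c v : ι → ℤ}
    (hc : ∀ i, c i ∈ C) (hv : ∀ i, v i ∈ C) (hp : ∀ i, (c + v) i ∈ C) (hq : ∀ i, (c - v) i ∈ C)
    (hcb : IsBalanced C c) (hvb : IsBalanced C v) (hpb : c + v = 0 ∨ IsBalanced C (c + v))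
    (hqb : c - v = 0 ∨ IsBalanced C (c - v)) : False := by
  have hparallelogram : ∑ i, ((c + v) i : ℝ) ^ 2 + ∑ i, ((c - v) i : ℝ) ^ 2 =
      2 * ∑ i, (c i : ℝ) ^ 2 + 2 * ∑ i, (v i : ℝ) ^ 2 := by
    simp only [mul_sum, ← sum_add_distrib, Pi.add_apply, Pi.sub_apply, Int.cast_add, Int.cast_sub]
    exact sum_congr rfl fun i _ => by ring
  linarith [hcb.mul_sum_sq_le hc, hvb.mul_sum_sq_le hv,
    sum_sq_lt_of_eq_zero_or_isBalanced hp h0 hC hpb,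
    sum_sq_lt_of_eq_zero_or_isBalanced hq h0 hC hqb]

end Profile

theorem card_Icc_neg_self (d : ℕ) : #(Icc (-(d : ℤ)) d) = 2 * d + 1 := by
  rw [Int.card_Icc]
  omega

theorem sub_mem_Icc_neg_self {d : ℕ} {a b : ℤ} (ha : a ∈ Icc (0 : ℤ) d) (hb : b ∈ Icc (0 : ℤ) d) :
    a - b ∈ Icc (-(d : ℤ)) d := by
  rw [mem_Icc] at *
  omega

/-- Perfect Mixing Dichotomy for C = [-d : d]: if two distinct solution pairs
collide in dot product with `x`, then `x` admits a (1/(3(2d+1)))-unbalanced solution. -/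
theorem stmt_0 (d n : ℕ) (hd : 1 ≤ d) (hn : 1 ≤ n) (x : Fin n → ℤ)
    (c : Fin n → ℤ) (hc_mem : ∀ i, c i ∈ Finset.Icc (-(d : ℤ)) d)
    (hc_ne : c ≠ 0) (hc_sol : ∑ i, c i * x i = 0)
    (a b a' b' : Fin n → ℤ)
    (ha : ∀ i, a i ∈ Finset.Icc (0 : ℤ) d)
    (hb : ∀ i, b i ∈ Finset.Icc (0 : ℤ) d)
    (ha' : ∀ i, a' i ∈ Finset.Icc (0 : ℤ) d)
    (hb' : ∀ i, b' i ∈ Finset.Icc (0 : ℤ) d)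
    (hab : a - b = c) (hab' : a' - b' = c)
    (hne : (a, b) ≠ (a', b'))
    (hdot : ∑ i, a i * x i = ∑ i, a' i * x i) :
    ∃ c'' : Fin n → ℤ, c'' ≠ 0 ∧ (∀ i, c'' i ∈ Finset.Icc (-(d : ℤ)) d) ∧
      (∑ i, c'' i * x i = 0) ∧
      ∃ z ∈ Finset.Icc (-(d : ℤ)) d,
        |((Finset.univ.filter fun i => c'' i = z).card : ℝ) -
            (n : ℝ) / (2 * (d : ℝ) + 1)| >
          (n : ℝ) / (3 * (2 * (d : ℝ) + 1)) := by
  by_contra! hcon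
  have hbal (t : Fin n → ℤ) (htC : ∀ i, t i ∈ Icc (-(d : ℤ)) d) (htx : t ⬝ᵥ x = 0) :
      t = 0 ∨ IsBalanced (Icc (-(d : ℤ)) d) t := or_iff_not_imp_left.2 fun ht z hz => by
    have := hcon t ht htC htx z hz
    rw [Fintype.card_fin, card_Icc_neg_self]
    push_cast
    rwa [div_div, mul_comm _ (3 : ℝ)]
  have : Nonempty (Fin n) := ⟨⟨0, hn⟩⟩
  set v := a - a' with hv_def
  have hvC (i : Fin n) : v i ∈ Icc (-(d : ℤ)) d := sub_mem_Icc_neg_self (ha i) (ha' i)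
  have hpC (i : Fin n) : (c + v) i ∈ Icc (-(d : ℤ)) d := by
    rw [← hab', hv_def, sub_add_sub_cancel']
    exact sub_mem_Icc_neg_self (ha i) (hb' i)
  have hqC (i : Fin n) : (c - v) i ∈ Icc (-(d : ℤ)) d := by
    rw [← hab, hv_def, sub_sub_sub_cancel_left]
    exact sub_mem_Icc_neg_self (ha' i) (hb i)
  have hvx : v ⬝ᵥ x = 0 := by rw [sub_dotProduct, sub_eq_zero]; exact hdot
  have hv0 : v ≠ 0 := fun hv => hne <| by
    rw [sub_eq_zero] at hv
    rw [← sub_sub_cancel a b, ← sub_sub_cancel a' b', hab, hab', hv]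
  exact not_isBalanced_parallelogram (by simp) (by rw [card_Icc_neg_self]; omega) hc_mem hvC hpC
    hqC ((hbal c hc_mem hc_sol).resolve_left hc_ne) ((hbal v hvC hvx).resolve_left hv0)
    (hbal _ hpC (by rw [add_dotProduct, hvx, add_zero]; exact hc_sol))
    (hbal _ hqC (by rw [sub_dotProduct, hvx, sub_zero]; exact hc_sol))
end

section
/- Let C, C₁, C₂ be finite sets of integers with sumset C₁ + C₂ = C, let n be an even positive integer, let x ∈ ℤ^n, and let c ∈ C^n satisfy c · x = 0. Define 𝓛 = {a ∈ ℤ^n : a_i ∈ C₁ for 1 ≤ i ≤ n/2 and a_i ∈ C₂ for n/2 < i ≤ n}, 𝓡 = {b ∈ ℤ^n : b_i ∈ C₂ for 1 ≤ i ≤ n/2 and b_i ∈ C₁ for n/2 < i ≤ n}, the set of solution pairs P = {(a,b) ∈ 𝓛 × 𝓡 : a + b = c}, and P_𝓡 = {b ∈ 𝓡 : ∃ a ∈ 𝓛, (a,b) ∈ P}. For every real ε > 0: if |{b · x : b ∈ P_𝓡}| ≤ |P| · 2^{−εn}, then there exist at least 2^{εn} distinct vectors c' ∈ C^n with c' ·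 x = 0. -/
/-!
Since `a = c - b`, a solution pair is determined by its right part `b`, so `|P| = |P_𝓡|`.
Grouping `P_𝓡` by the value of `b · x`, some class has at least `|P| / |{b · x : b ∈ P_𝓡}| ≥ 2^{εn}`
members. For a fixed member `b₀`, the translation `b ↦ (c - b₀) + b` sends the class injectively
to vectors in `(C₁ + C₂)^n = C^n` (coordinatewise, `c - b₀ ∈ 𝓛` and `b ∈ 𝓡`) whose dot product with
`x` is `c · x - b₀ · x + b · x = c · x = 0`.
-/

open Pointwise

theorem Set.ncard_le_mul_ncard_image {α β : Type*} {s : Set α} (hs : s.Finite) (f : α → β)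
    (k : ℕ) (hk : ∀ a ∈ s, {b ∈ s | f b = f a}.ncard ≤ k) : s.ncard ≤ k * (f '' s).ncard := by
  classical
  obtain ⟨s, rfl⟩ := hs.exists_finset_coe
  rw [Set.ncard_coe_finset, ← Finset.coe_image, Set.ncard_coe_finset]
  refine Finset.card_le_mul_card_image s k fun y hy => ?_
  obtain ⟨a, ha, rfl⟩ := Finset.mem_image.mp hy
  simpa [← Finset.coe_filter] using hk a ha

theorem Set.injOn_snd_of_add_eq {G : Type*} [AddGroup G] {P : Set (G × G)} {c : G}
    (hP : ∀ p ∈ P, p.1 + p.2 = c) : P.InjOn Prod.snd := by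
  rintro ⟨a, b⟩ hab ⟨a', b'⟩ hab' (rfl : b = b')
  have h : a + b = a' + b := (hP _ hab).trans (hP _ hab').symm
  rw [add_right_cancel h]

section SplitBox

variable {α : Type*} {n m : ℕ} {A B : Finset α}

def splitBox (n m : ℕ) (A B : Finset α) : Set (Fin n → α) :=
  {a | ∀ i : Fin n, ((i : ℕ) < m → a i ∈ A) ∧ (m ≤ (i : ℕ) → a i ∈ B)}

theorem splitBox_finite : (splitBox n m A B).Finite := by
  classical
  refine (Set.Finite.pi fun _ : Fin n => (A ∪ B).finite_toSet).subset fun a ha i _ => ?_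
  rcases lt_or_ge (i : ℕ) m with h | h
  · exact Finset.mem_union_left _ ((ha i).1 h)
  · exact Finset.mem_union_right _ ((ha i).2 h)

variable [AddCommMonoid α]

def splitPairs (n m : ℕ) (A B : Finset α) (c : Fin n → α) : Set ((Fin n → α) × (Fin n → α)) :=
  {p | p.1 ∈ splitBox n m A B ∧ p.2 ∈ splitBox n m B A ∧ p.1 + p.2 = c}

def splitPairsRight (n m : ℕ) (A B : Finset α) (c : Fin n → α) : Set (Fin n → α) :=
  {b | ∃ a, (a, b) ∈ splitPairs n m A B c}

theorem splitPairsRight_subset (c : Fin n → α) :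
    splitPairsRight n m A B c ⊆ splitBox n m B A := fun _ ⟨_, _, hb, _⟩ => hb

variable [DecidableEq α]

theorem add_apply_mem_add_of_mem_splitBox {a b : Fin n → α} (ha : a ∈ splitBox n m A B)
    (hb : b ∈ splitBox n m B A) (i : Fin n) : (a + b) i ∈ A + B := by
  rcases lt_or_ge (i : ℕ) m with h | h
  · exact Finset.add_mem_add ((ha i).1 h) ((hb i).1 h)
  · rw [Pi.add_apply, add_comm (a i)]
    exact Finset.add_mem_add ((hb i).2 h) ((ha i).2 h)

theorem exists_mem_splitBox_add_eq {c : Fin n → α} (hc : ∀ i, c i ∈ A + B) :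
    ∃ a ∈ splitBox n m A B, ∃ b ∈ splitBox n m B A, a + b = c := by
  choose u hu v hv huv using fun i => Finset.mem_add.mp (hc i)
  refine ⟨fun i => if (i : ℕ) < m then u i else v i, fun i => ⟨fun h => ?_, fun h => ?_⟩,
    fun i => if (i : ℕ) < m then v i else u i, fun i => ⟨fun h => ?_, fun h => ?_⟩, ?_⟩
  · simpa [h] using hu i
  · simpa [Nat.not_lt.mpr h] using hv i
  · simpa [h] using hv i
  · simpa [Nat.not_lt.mpr h] using hu i
  · funext i
    by_cases h : (i : ℕ) < m
    · simpa [h] using huv i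
    · simpa [h, add_comm] using huv i

end SplitBox

section Counting

variable {R : Type*} [CommRing R] {n m : ℕ} {A B : Finset R}

theorem ncard_splitPairs_eq (c : Fin n → R) :
    (splitPairs n m A B c).ncard = (splitPairsRight n m A B c).ncard := by
  have himage : splitPairsRight n m A B c = Prod.snd '' splitPairs n m A B c := by
    ext b
    simp [splitPairsRight]
  rw [himage, (Set.injOn_snd_of_add_eq fun p hp => hp.2.2).ncard_image]

theorem finite_setOf_forall_mem_and_dotProduct_eq (C : Finset R) (x : Fin n → R) (t : R) :
    {c' : Fin n → R | (∀ i, c' i ∈ C) ∧ c' ⬝ᵥ x = t}.Finite :=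
  (Set.Finite.pi fun _ : Fin n => C.finite_toSet).subset fun _ hc' i _ => hc'.1 i

variable [DecidableEq R]

/-- The fiber injects into the solutions via `b ↦ (c - b₀) + b`. -/
theorem ncard_fiber_splitPairsRight_le {c b₀ : Fin n → R} (x : Fin n → R)
    (hb₀ : b₀ ∈ splitPairsRight n m A B c) :
    {b ∈ splitPairsRight n m A B c | b ⬝ᵥ x = b₀ ⬝ᵥ x}.ncard ≤
      {c' : Fin n → R | (∀ i, c' i ∈ A + B) ∧ c' ⬝ᵥ x = c ⬝ᵥ x}.ncard := by
  obtain ⟨a₀, ha₀, -, hab₀⟩ := hb₀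
  obtain rfl : a₀ = c - b₀ := eq_sub_of_add_eq hab₀
  refine Set.ncard_le_ncard_of_injOn (c - b₀ + ·) ?_ (add_right_injective _).injOn
    (finite_setOf_forall_mem_and_dotProduct_eq _ x _)
  rintro b ⟨⟨a, -, hb, -⟩, hdot⟩
  refine ⟨add_apply_mem_add_of_mem_splitBox ha₀ hb, ?_⟩
  simp [add_dotProduct, sub_dotProduct, hdot]

theorem ncard_splitPairs_le_mul (c x : Fin n → R) :
    (splitPairs n m A B c).ncard ≤
      {c' : Fin n → R | (∀ i, c' i ∈ A + B) ∧ c' ⬝ᵥ x = c ⬝ᵥ x}.ncard *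
        ((· ⬝ᵥ x) '' splitPairsRight n m A B c).ncard := by
  rw [ncard_splitPairs_eq]
  exact Set.ncard_le_mul_ncard_image (splitBox_finite.subset (splitPairsRight_subset c)) _ _
    fun b₀ hb₀ => ncard_fiber_splitPairsRight_le x hb₀

end Counting

theorem stmt_2_general (C C₁ C₂ : Finset ℤ) (hC : C₁ + C₂ = C)
    (n : ℕ)
    (x c : Fin n → ℤ) (hc : ∀ i, c i ∈ C) (hcx : ∑ i, c i * x i = 0)
    (L R : Set (Fin n → ℤ))
    (hL : L = {a | ∀ i : Fin n, ((i : ℕ) < n / 2 → a i ∈ C₁) ∧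
      (n / 2 ≤ (i : ℕ) → a i ∈ C₂)})
    (hR : R = {b | ∀ i : Fin n, ((i : ℕ) < n / 2 → b i ∈ C₂) ∧
      (n / 2 ≤ (i : ℕ) → b i ∈ C₁)})
    (P : Set ((Fin n → ℤ) × (Fin n → ℤ)))
    (hP : P = {p | p.1 ∈ L ∧ p.2 ∈ R ∧ p.1 + p.2 = c})
    (PR : Set (Fin n → ℤ)) (hPR : PR = {b | ∃ a, (a, b) ∈ P})
    (ε : ℝ)
    (hmix : (Set.ncard ((fun b => ∑ i, b i * x i) '' PR) : ℝ) ≤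
        (Set.ncard P : ℝ) * 2 ^ (-(ε * n))) :
    (2 : ℝ) ^ (ε * n) ≤
      (Set.ncard {c' : Fin n → ℤ | (∀ i, c' i ∈ C) ∧ ∑ i, c' i * x i = 0} : ℝ) := by
  subst hC hL hR
  obtain rfl : P = splitPairs n (n / 2) C₁ C₂ c := hP
  obtain rfl : PR = splitPairsRight n (n / 2) C₁ C₂ c := hPR
  obtain ⟨a, ha, b, hb, hab⟩ := exists_mem_splitBox_add_eq (m := n / 2) hc
  have hp : 0 < (splitPairs n (n / 2) C₁ C₂ c).ncard := by
    rw [ncard_splitPairs_eq]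
    exact Set.Nonempty.ncard_pos (splitBox_finite.subset (splitPairsRight_subset c))
      ⟨b, a, ha, hb, hab⟩
  set p := (splitPairs n (n / 2) C₁ C₂ c).ncard
  set k := ((fun b => ∑ i, b i * x i) '' splitPairsRight n (n / 2) C₁ C₂ c).ncard
  set s := {c' : Fin n → ℤ | (∀ i, c' i ∈ C₁ + C₂) ∧ ∑ i, c' i * x i = 0}.ncard
  have hcount : p ≤ s * k := by
    have h := ncard_splitPairs_le_mul (m := n / 2) (A := C₁) (B := C₂) c x
    rwa [show c ⬝ᵥ x = 0 from hcx] at h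
  rw [Real.rpow_neg zero_le_two, ← div_eq_mul_inv, le_div_iff₀ (by positivity)] at hmix
  refine le_of_mul_le_mul_left ?_ (Nat.cast_pos.mpr hp)
  calc (p : ℝ) * 2 ^ (ε * n) ≤ s * k * 2 ^ (ε * n) := by gcongr; exact_mod_cast hcount
    _ = s * (k * 2 ^ (ε * n)) := mul_assoc _ _ _
    _ ≤ s * p := by gcongr
    _ = p * s := mul_comm _ _

/-- Mixing dichotomy via coefficient shifting: if the right components of the
solution pairs produce few distinct dot products with `x`, then `x` admits at
least 2^{εn} distinct solution vectors supported on C. -/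
theorem stmt_2 (C C₁ C₂ : Finset ℤ) (hC : C₁ + C₂ = C)
    (n : ℕ) (hn : 0 < n) (hneven : Even n)
    (x c : Fin n → ℤ) (hc : ∀ i, c i ∈ C) (hcx : ∑ i, c i * x i = 0)
    (L R : Set (Fin n → ℤ))
    (hL : L = {a | ∀ i : Fin n, ((i : ℕ) < n / 2 → a i ∈ C₁) ∧
      (n / 2 ≤ (i : ℕ) → a i ∈ C₂)})
    (hR : R = {b | ∀ i : Fin n, ((i : ℕ) < n / 2 → b i ∈ C₂) ∧
      (n / 2 ≤ (i : ℕ) → b i ∈ C₁)})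
    (P : Set ((Fin n → ℤ) × (Fin n → ℤ)))
    (hP : P = {p | p.1 ∈ L ∧ p.2 ∈ R ∧ p.1 + p.2 = c})
    (PR : Set (Fin n → ℤ)) (hPR : PR = {b | ∃ a, (a, b) ∈ P})
    (ε : ℝ) (hε : 0 < ε)
    (hmix : (Set.ncard ((fun b => ∑ i, b i * x i) '' PR) : ℝ) ≤
        (Set.ncard P : ℝ) * 2 ^ (-(ε * n))) :
    (2 : ℝ) ^ (ε * n) ≤
      (Set.ncard {c' : Fin n → ℤ | (∀ i, c' i ∈ C) ∧ ∑ i, c' i * x i = 0} : ℝ) :=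
  stmt_2_general C C₁ C₂ hC n x c hc hcx L R hL hR P hP PR hPR ε hmix
end

section
/- Fix an integer d ≥ 3, let C₁ = {0, 1}, C₂ = {−d, −d+1, …, −2} ∪ {1, 2, …, d−1}, let n be an even positive integer, and let c ∈ [±d]^n. Define 𝓛 = {a ∈ ℤ^n : a_i ∈ C₁ for 1 ≤ i ≤ n/2 and a_i ∈ C₂ for n/2 < i ≤ n} and 𝓡 = {b ∈ ℤ^n : b_i ∈ C₂ for 1 ≤ i ≤ n/2 and b_i ∈ C₁ for n/2 < i ≤ n}. Then the number of pairs (a, b) ∈ 𝓛 × 𝓡 with a + b = c equals 2^m, where m = #{i ∈ [n] : 2 ≤ |c_i| ≤ d − 1}. -/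
/-!
A pair `(a, b) ∈ 𝓛 × 𝓡` with `a + b = c` is chosen coordinate by coordinate, so the count is a
product over `i` of the number of ways to write `c i = x + y` with one summand in `{0, 1}` and the
other in `C₂`. The summand in `{0, 1}` determines the other, and it is admissible exactly when
`c i - x ∈ C₂`: for `2 ≤ |c i| ≤ d - 1` both `c i` and `c i - 1` lie in `C₂`, while for
`|c i| ∈ {1, d}` exactly one of them does.
-/

open Finset

section ProductFiber

variable {G : Type*} [AddGroup G] [DecidableEq G]

theorem card_filter_product_add_eq_left (s t : Finset G) (c : G) :
    #{q ∈ s ×ˢ t | q.1 + q.2 = c} = #{x ∈ s | -x + c ∈ t} := by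
  refine card_nbij' Prod.fst (fun x => (x, -x + c)) ?_ ?_ ?_ ?_ <;>
    simp +contextual [Set.MapsTo, Set.LeftInvOn, Set.RightInvOn, ← eq_neg_add_iff_add_eq]
  rintro x y - hy rfl
  exact hy

theorem card_filter_product_add_eq_right (s t : Finset G) (c : G) :
    #{q ∈ s ×ˢ t | q.1 + q.2 = c} = #{y ∈ t | c - y ∈ s} := by
  refine card_nbij' Prod.snd (fun y => (c - y, y)) ?_ ?_ ?_ ?_ <;>
    simp +contextual [Set.MapsTo, Set.LeftInvOn, Set.RightInvOn, ← eq_sub_iff_add_eq]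
  rintro x y hx - rfl
  exact hx

end ProductFiber

theorem ncard_setOf_forall_mem_prod {ι α β : Type*} [Fintype ι] [DecidableEq ι]
    (S : ι → Finset (α × β)) :
    {p : (ι → α) × (ι → β) | ∀ i, (p.1 i, p.2 i) ∈ S i}.ncard = ∏ i, #(S i) := by
  have : {p : (ι → α) × (ι → β) | ∀ i, (p.1 i, p.2 i) ∈ S i} =
      Equiv.arrowProdEquivProdArrow ι (fun _ => α) (fun _ => β) '' Fintype.piFinset S := by
    rw [Equiv.image_eq_preimage_symm]
    ext p
    simp
  rw [this, Set.ncard_image_of_injective _ (Equiv.injective _), Set.ncard_coe_finset,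
    Fintype.card_piFinset]

theorem card_filter_zero_one_sub_mem {d c : ℤ} (hd : 2 ≤ d) (hc : c ∈ Icc (-d) d \ {0}) :
    #{x ∈ ({0, 1} : Finset ℤ) | c - x ∈ Icc (-d) (-2) ∪ Icc 1 (d - 1)} =
      if 2 ≤ |c| ∧ |c| ≤ d - 1 then 2 else 1 := by
  simp only [mem_sdiff, mem_Icc, mem_singleton] at hc
  rw [show ({0, 1} : Finset ℤ) = insert 0 {1} from rfl, filter_insert, filter_singleton]
  simp only [mem_union, mem_Icc, abs_eq_max_neg, le_max_iff, max_le_iff]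
  split_ifs <;> first | (exfalso; omega) | simp

theorem stmt_5_general (d : ℤ) (hd : 3 ≤ d) (n : ℕ)
    (c : Fin n → ℤ) (hc : ∀ i, c i ∈ Finset.Icc (-d) d \ {0}) :
    Set.ncard {p : (Fin n → ℤ) × (Fin n → ℤ) |
        (∀ i : Fin n, ((i : ℕ) < n / 2 → p.1 i ∈ ({0, 1} : Finset ℤ)) ∧
          (n / 2 ≤ (i : ℕ) → p.1 i ∈ Finset.Icc (-d) (-2) ∪ Finset.Icc 1 (d - 1))) ∧
        (∀ i : Fin n, ((i : ℕ) < n / 2 → p.2 i ∈ Finset.Icc (-d) (-2) ∪ Finset.Icc 1 (d - 1)) ∧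
          (n / 2 ≤ (i : ℕ) → p.2 i ∈ ({0, 1} : Finset ℤ))) ∧
        p.1 + p.2 = c} =
      2 ^ (Finset.univ.filter fun i => 2 ≤ |c i| ∧ |c i| ≤ d - 1).card := by
  set C₁ : Finset ℤ := {0, 1}
  set C₂ : Finset ℤ := Icc (-d) (-2) ∪ Icc 1 (d - 1)
  let S : Fin n → Finset (ℤ × ℤ) := fun i =>
    if (i : ℕ) < n / 2 then {q ∈ C₁ ×ˢ C₂ | q.1 + q.2 = c i} else {q ∈ C₂ ×ˢ C₁ | q.1 + q.2 = c i}
  have hS : ∀ i, #(S i) = if 2 ≤ |c i| ∧ |c i| ≤ d - 1 then 2 else 1 := by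
    intro i
    rw [← card_filter_zero_one_sub_mem (by omega) (hc i)]
    by_cases hi : (i : ℕ) < n / 2
    · simp only [S, if_pos hi, card_filter_product_add_eq_left, neg_add_eq_sub]
      rfl
    · simp only [S, if_neg hi, card_filter_product_add_eq_right]
      rfl
  calc _ = {p : (Fin n → ℤ) × (Fin n → ℤ) | ∀ i, (p.1 i, p.2 i) ∈ S i}.ncard := by
        congr 1
        ext p
        simp only [Set.mem_ofPred_eq, funext_iff, Pi.add_apply, ← forall_and]
        refine forall_congr' fun i => ?_
        by_cases hi : (i : ℕ) < n / 2 <;> simp [S, hi, and_assoc, le_of_not_gt]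
    _ = ∏ i, #(S i) := ncard_setOf_forall_mem_prod S
    _ = _ := by
      rw [prod_congr rfl fun i _ => hS i, prod_ite, prod_const, prod_const, one_pow, mul_one]

/-- Number of coefficient-shifted solution pairs for C = [±d], d ≥ 3, with
factors C₁ = {0,1} and C₂ = {−d,…,−2} ∪ {1,…,d−1}: the number of pairs
(a, b) ∈ 𝓛 × 𝓡 with a + b = c equals 2^m, where m = #{i : 2 ≤ |c_i| ≤ d−1}. -/
theorem stmt_5 (d : ℤ) (hd : 3 ≤ d) (n : ℕ) (hn : 0 < n) (hneven : Even n)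
    (c : Fin n → ℤ) (hc : ∀ i, c i ∈ Finset.Icc (-d) d \ {0}) :
    Set.ncard {p : (Fin n → ℤ) × (Fin n → ℤ) |
        (∀ i : Fin n, ((i : ℕ) < n / 2 → p.1 i ∈ ({0, 1} : Finset ℤ)) ∧
          (n / 2 ≤ (i : ℕ) → p.1 i ∈ Finset.Icc (-d) (-2) ∪ Finset.Icc 1 (d - 1))) ∧
        (∀ i : Fin n, ((i : ℕ) < n / 2 → p.2 i ∈ Finset.Icc (-d) (-2) ∪ Finset.Icc 1 (d - 1)) ∧
          (n / 2 ≤ (i : ℕ) → p.2 i ∈ ({0, 1} : Finset ℤ))) ∧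
        p.1 + p.2 = c} =
      2 ^ (Finset.univ.filter fun i => 2 ≤ |c i| ∧ |c i| ≤ d - 1).card :=
  stmt_5_general d hd n c hc
end

section
/- Let n be an even positive integer, let c ∈ [-1:1]^n with solution profile π(z) = #{i : c_i = z}, and suppose π(1) = π(−1), π(0) is even, and e is an integer with 0 ≤ e ≤ π(1). Define the set of good solution pairs G(c) as the set of pairs (a, b) ∈ [0:2]^n × [0:2]^n such that (i) #a^{−1}(1) = #b^{−1}(1) = n/2 and #a^{−1}(2) = #b^{−1}(2) = e; (ii) a − b = c; and (iii) for every i with c_i = 0, (a_i, b_i) ∈ {(0,0), (1,1)}. Then |G(c)| = C(π(1), e) · C(π(−1), e) · C(π(0), π(0)/2), where C(·,·) denotes the binomial coefficient. -/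
/-!
A good pair `(a, b)` is determined by the set `X` of coordinates at which `a` exceeds
`max c 0`: the constraints force `a = max c 0 + 1_X` and `b = max (-c) 0 + 1_X`. Read through `X`,
`a` has `e` entries equal to `2` iff `X` meets `c⁻¹(1)` in `e` points, `b` likewise for `c⁻¹(-1)`,
and then, as `π(1) = π(-1)`, both conditions on the number of entries equal to `1` say that `X`
meets `c⁻¹(0)` in `π(0)/2` points. The three intersections are chosen independently.
-/

open Finset

theorem card_filter_card_fiber_eq_prod_choose {ι κ : Type*} [Fintype ι] [DecidableEq ι]
    [DecidableEq κ] (f : ι → κ) (t : Finset κ) (hf : ∀ i, f i ∈ t) (k : κ → ℕ) :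
    #{X : Finset ι | ∀ j ∈ t, #{i ∈ X | f i = j} = k j} =
      ∏ j ∈ t, (#{i | f i = j}).choose (k j) := by
  have fiber_eq (g : (j : κ) → j ∈ t → Finset ι)
      (hg : ∀ j hj, g j hj ⊆ ({i | f i = j} : Finset ι)) (j : κ) (hj : j ∈ t) :
      ({i | i ∈ g (f i) (hf i) ∧ f i = j} : Finset ι) = g j hj := by
    ext i
    simp only [mem_filter, mem_univ, true_and]
    constructor
    · rintro ⟨hi, rfl⟩
      exact hi
    · intro hi
      obtain rfl : f i = j := by simpa using hg j hj hi
      exact ⟨hi, rfl⟩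
  simp_rw [← card_powersetCard, ← card_pi]
  refine card_nbij' (fun X j _ => {i ∈ X | f i = j})
    (fun g => ({i | i ∈ g (f i) (hf i)} : Finset ι)) ?_ ?_ ?_ ?_
  · intro X hX
    simp only [coe_filter, mem_univ, true_and, mem_coe, mem_pi, mem_powersetCard] at hX ⊢
    exact fun j hj => ⟨filter_subset_filter _ (subset_univ X), hX j hj⟩
  · intro g hg
    simp only [coe_filter, mem_univ, true_and, mem_coe, mem_pi, mem_powersetCard] at hg ⊢
    intro j hj
    rw [filter_filter, fiber_eq g (fun j hj => (hg j hj).1) j hj, (hg j hj).2]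
  · intro X _
    simp
  · intro g hg
    simp only [mem_coe, mem_pi, mem_powersetCard] at hg
    funext j hj
    exact (filter_filter _ _ _).trans (fiber_eq g (fun j hj => (hg j hj).1) j hj)

theorem card_filter_eq_one_add_eq_neg_one_add_eq_zero {ι : Type*} {c : ι → ℤ}
    (hc : ∀ i, c i ∈ Icc (-1 : ℤ) 1) (s : Finset ι) :
    #{i ∈ s | c i = 1} + #{i ∈ s | c i = -1} + #{i ∈ s | c i = 0} = #s := by
  simp only [card_filter, card_eq_sum_ones s, ← sum_add_distrib]
  refine sum_congr rfl fun i _ => ?_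
  have := mem_Icc.1 (hc i)
  split_ifs <;> omega

section

variable {ι : Type*} [DecidableEq ι]

theorem ncard_setOf_card_filter_eq [Fintype ι] {c : ι → ℤ} (hc : ∀ i, c i ∈ Icc (-1 : ℤ) 1)
    (a b k : ℕ) :
    {X : Finset ι |
        #{i ∈ X | c i = 1} = a ∧ #{i ∈ X | c i = -1} = b ∧ #{i ∈ X | c i = 0} = k}.ncard =
      (#{i | c i = 1}).choose a * (#{i | c i = -1}).choose b * (#{i | c i = 0}).choose k := by
  have := card_filter_card_fiber_eq_prod_choose c {1, -1, 0}
    (fun i => by have := mem_Icc.1 (hc i); simp only [mem_insert, mem_singleton]; omega)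
    (fun z => if z = 1 then a else if z = -1 then b else k)
  simp only [Int.reduceNeg, mem_insert, mem_singleton, forall_eq_or_imp, ↓reduceIte,
    reduceCtorEq, forall_eq, zero_ne_one, zero_eq_neg, one_ne_zero, or_self, not_false_eq_true,
    prod_insert, neg_eq_zero, prod_singleton] at this
  rw [mul_assoc, ← this, ← Set.ncard_coe_finset, coe_filter_univ]

def diffPair (c : ι → ℤ) (X : Finset ι) : (ι → ℤ) × (ι → ℤ) :=
  (fun i => max (c i) 0 + if i ∈ X then 1 else 0, fun i => max (-c i) 0 + if i ∈ X then 1 else 0)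

theorem diffPair_neg (c : ι → ℤ) (X : Finset ι) : diffPair (-c) X = (diffPair c X).swap := by
  simp [diffPair]

theorem diffPair_injective (c : ι → ℤ) : Function.Injective (diffPair c) := by
  intro X Y h
  ext i
  have := congrFun (congrArg Prod.fst h) i
  by_cases hX : i ∈ X <;> by_cases hY : i ∈ Y <;> simp [diffPair, hX, hY] at this ⊢

variable [Fintype ι]

theorem exists_diffPair_eq_iff {c : ι → ℤ} (hc : ∀ i, c i ∈ Icc (-1 : ℤ) 1)
    {p : (ι → ℤ) × (ι → ℤ)} :
    (∃ X, diffPair c X = p) ↔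
      (∀ i, p.1 i ∈ Icc (0 : ℤ) 2) ∧ (∀ i, p.2 i ∈ Icc (0 : ℤ) 2) ∧ p.1 - p.2 = c ∧
        ∀ i, c i = 0 → (p.1 i = 0 ∧ p.2 i = 0) ∨ (p.1 i = 1 ∧ p.2 i = 1) := by
  constructor
  · rintro ⟨X, rfl⟩
    refine ⟨fun i => ?_, fun i => ?_, funext fun i => ?_, fun i _ => ?_⟩ <;>
      have := mem_Icc.1 (hc i) <;>
      simp only [diffPair, mem_Icc, Pi.sub_apply] <;> split_ifs <;> omega
  · rintro ⟨ha, hb, hab, h0⟩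
    refine ⟨({i | p.1 i ≠ max (c i) 0} : Finset ι),
      Prod.ext (funext fun i => ?_) (funext fun i => ?_)⟩ <;>
      have := mem_Icc.1 (hc i) <;> have := mem_Icc.1 (ha i) <;> have := mem_Icc.1 (hb i) <;>
      have := congrFun hab i <;> have := imp_iff_not_or.1 (h0 i) <;>
      simp only [diffPair, mem_filter, mem_univ, true_and, Pi.sub_apply] at * <;>
      split_ifs <;> omega

theorem card_diffPair_fst_eq_two {c : ι → ℤ} (hc : ∀ i, c i ≤ 1) (X : Finset ι) :
    #{i | (diffPair c X).1 i = 2} = #{i ∈ X | c i = 1} := by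
  rw [← filter_univ_mem X, filter_filter]
  congr 1
  ext i
  have := hc i
  by_cases hi : i ∈ X <;> simp [diffPair, hi] <;> omega

theorem card_diffPair_fst_eq_one_add {c : ι → ℤ} (hc : ∀ i, c i ≤ 1) (X : Finset ι) :
    #{i | (diffPair c X).1 i = 1} + 2 * #{i ∈ X | c i = 1} = #{i | c i = 1} + #X := by
  rw [← filter_univ_mem X, filter_filter]
  simp only [card_filter, mul_sum, ← sum_add_distrib]
  refine sum_congr rfl fun i _ => ?_
  have := hc i
  by_cases hi : i ∈ X <;>
    simp only [diffPair, filter_univ_mem, hi, true_and, false_and, if_true, if_false] <;>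
    split_ifs <;> omega

theorem card_diffPair_snd_eq_two {c : ι → ℤ} (hc : ∀ i, -1 ≤ c i) (X : Finset ι) :
    #{i | (diffPair c X).2 i = 2} = #{i ∈ X | c i = -1} := by
  simpa [diffPair_neg, neg_eq_iff_eq_neg] using
    card_diffPair_fst_eq_two (c := -c) (fun i => neg_le.1 (hc i)) X

theorem card_diffPair_snd_eq_one_add {c : ι → ℤ} (hc : ∀ i, -1 ≤ c i) (X : Finset ι) :
    #{i | (diffPair c X).2 i = 1} + 2 * #{i ∈ X | c i = -1} = #{i | c i = -1} + #X := by
  simpa [diffPair_neg, neg_eq_iff_eq_neg] using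
    card_diffPair_fst_eq_one_add (c := -c) (fun i => neg_le.1 (hc i)) X

theorem card_diffPair_levels_eq_iff {c : ι → ℤ} (hc : ∀ i, c i ∈ Icc (-1 : ℤ) 1)
    (hbal : #{i | c i = 1} = #{i | c i = -1}) (e : ℕ) (X : Finset ι) :
    (#{i | (diffPair c X).1 i = 1} = Fintype.card ι / 2 ∧
        #{i | (diffPair c X).2 i = 1} = Fintype.card ι / 2 ∧
        #{i | (diffPair c X).1 i = 2} = e ∧ #{i | (diffPair c X).2 i = 2} = e) ↔
      #{i ∈ X | c i = 1} = e ∧ #{i ∈ X | c i = -1} = e ∧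
        #{i ∈ X | c i = 0} = #{i | c i = 0} / 2 := by
  have hle : ∀ i, c i ≤ 1 := fun i => (mem_Icc.1 (hc i)).2
  have hge : ∀ i, -1 ≤ c i := fun i => (mem_Icc.1 (hc i)).1
  have hX := card_filter_eq_one_add_eq_neg_one_add_eq_zero hc X
  have huniv := card_filter_eq_one_add_eq_neg_one_add_eq_zero hc univ
  have ha₁ := card_diffPair_fst_eq_one_add hle X
  have hb₁ := card_diffPair_snd_eq_one_add hge X
  rw [card_univ] at huniv
  rw [card_diffPair_fst_eq_two hle, card_diffPair_snd_eq_two hge]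
  omega

/-- The set `G(c)` of good solution pairs, with `m` in place of `n / 2`. -/
def goodPairs (c : ι → ℤ) (m e : ℕ) : Set ((ι → ℤ) × (ι → ℤ)) :=
  {p | (∀ i, p.1 i ∈ Finset.Icc (0 : ℤ) 2) ∧ (∀ i, p.2 i ∈ Finset.Icc (0 : ℤ) 2) ∧
    (Finset.univ.filter fun i => p.1 i = 1).card = m ∧
    (Finset.univ.filter fun i => p.2 i = 1).card = m ∧
    (Finset.univ.filter fun i => p.1 i = 2).card = e ∧
    (Finset.univ.filter fun i => p.2 i = 2).card = e ∧
    p.1 - p.2 = c ∧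
    (∀ i, c i = 0 → (p.1 i = 0 ∧ p.2 i = 0) ∨ (p.1 i = 1 ∧ p.2 i = 1))}

theorem goodPairs_eq_image_diffPair {c : ι → ℤ} (hc : ∀ i, c i ∈ Icc (-1 : ℤ) 1)
    (hbal : #{i | c i = 1} = #{i | c i = -1}) (e : ℕ) :
    goodPairs c (Fintype.card ι / 2) e = diffPair c ''
      {X | #{i ∈ X | c i = 1} = e ∧ #{i ∈ X | c i = -1} = e ∧
        #{i ∈ X | c i = 0} = #{i | c i = 0} / 2} := by
  ext p
  constructor
  · rintro ⟨ha, hb, ha₁, hb₁, ha₂, hb₂, hab, h0⟩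
    obtain ⟨X, rfl⟩ := (exists_diffPair_eq_iff hc).2 ⟨ha, hb, hab, h0⟩
    exact ⟨X, (card_diffPair_levels_eq_iff hc hbal e X).1 ⟨ha₁, hb₁, ha₂, hb₂⟩, rfl⟩
  · rintro ⟨X, hX, rfl⟩
    obtain ⟨ha, hb, hab, h0⟩ := (exists_diffPair_eq_iff hc).1 ⟨X, rfl⟩
    obtain ⟨ha₁, hb₁, ha₂, hb₂⟩ := (card_diffPair_levels_eq_iff hc hbal e X).2 hX
    exact ⟨ha, hb, ha₁, hb₁, ha₂, hb₂, hab, h0⟩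

end

theorem stmt_7_general (n : ℕ)
    (c : Fin n → ℤ) (hc : ∀ i, c i ∈ Finset.Icc (-1 : ℤ) 1)
    (π : ℤ → ℕ) (hπ : ∀ z, π z = (Finset.univ.filter fun i => c i = z).card)
    (hbal : π 1 = π (-1))
    (e : ℕ) :
    Set.ncard {p : (Fin n → ℤ) × (Fin n → ℤ) |
        (∀ i, p.1 i ∈ Finset.Icc (0 : ℤ) 2) ∧ (∀ i, p.2 i ∈ Finset.Icc (0 : ℤ) 2) ∧
        (Finset.univ.filter fun i => p.1 i = 1).card = n / 2 ∧
        (Finset.univ.filter fun i => p.2 i = 1).card = n / 2 ∧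
        (Finset.univ.filter fun i => p.1 i = 2).card = e ∧
        (Finset.univ.filter fun i => p.2 i = 2).card = e ∧
        p.1 - p.2 = c ∧
        (∀ i, c i = 0 → (p.1 i = 0 ∧ p.2 i = 0) ∨ (p.1 i = 1 ∧ p.2 i = 1))} =
      Nat.choose (π 1) e * Nat.choose (π (-1)) e * Nat.choose (π 0) (π 0 / 2) := by
  change (goodPairs c (n / 2) e).ncard = _
  rw [show n / 2 = Fintype.card (Fin n) / 2 by rw [Fintype.card_fin],
    goodPairs_eq_image_diffPair hc (by rw [← hπ, ← hπ, hbal]),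
    Set.ncard_image_of_injective _ (diffPair_injective c), ncard_setOf_card_filter_eq hc,
    ← hπ, ← hπ, ← hπ]

/-- Number of good solution pairs for Equal Subset Sum:
|G(c)| = C(π(1), e) · C(π(−1), e) · C(π(0), π(0)/2). -/
theorem stmt_7 (n : ℕ) (hn : 0 < n) (hneven : Even n)
    (c : Fin n → ℤ) (hc : ∀ i, c i ∈ Finset.Icc (-1 : ℤ) 1)
    (π : ℤ → ℕ) (hπ : ∀ z, π z = (Finset.univ.filter fun i => c i = z).card)
    (hbal : π 1 = π (-1)) (hev : Even (π 0))
    (e : ℕ) (he : e ≤ π 1) :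
    Set.ncard {p : (Fin n → ℤ) × (Fin n → ℤ) |
        (∀ i, p.1 i ∈ Finset.Icc (0 : ℤ) 2) ∧ (∀ i, p.2 i ∈ Finset.Icc (0 : ℤ) 2) ∧
        (Finset.univ.filter fun i => p.1 i = 1).card = n / 2 ∧
        (Finset.univ.filter fun i => p.2 i = 1).card = n / 2 ∧
        (Finset.univ.filter fun i => p.1 i = 2).card = e ∧
        (Finset.univ.filter fun i => p.2 i = 2).card = e ∧
        p.1 - p.2 = c ∧
        (∀ i, c i = 0 → (p.1 i = 0 ∧ p.2 i = 0) ∨ (p.1 i = 1 ∧ p.2 i = 1))} =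
      Nat.choose (π 1) e * Nat.choose (π (-1)) e * Nat.choose (π 0) (π 0 / 2) :=
  stmt_7_general n c hc π hπ hbal e
end

section
/- Let n be an even positive integer, x ∈ ℤ^n, and let c ∈ [-1:1]^n be a nonzero vector with c · x = 0 that has minimal support: every nonzero c' ∈ [-1:1]^n with c' · x = 0 satisfies #{i : c'_i ≠ 0} ≥ #{i : c_i ≠ 0}. Let π be the solution profile of c and assume π(0) ≤ n/3 and π(1) = π(−1). Let e be an integer with 0 ≤ e < n/12, and define the good solution pairs G(c) as the pairs (a, b) ∈ [0:2]^n × [0:2]^n with #a^{−1}(1) = #b^{−1}(1) = n/2, #a^{−1}(2) = #b^{−1}(2) = e, a − b = c, and (a_i, b_i) ∈ {(0,0),(1,1)} whenever c_i = 0. Then for any two distinct good solution pairs (a, b), (a', b') ∈ G(c), we have a · x ≠ a' · x. -/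
/-!
If two good pairs had `a · x = a' · x`, then `d = a - a'` would be a nonzero `[-1:1]`-vector with
`d · x = 0`. Entrywise, `d i ≠ 0` forces `c i = 0` or one of `a i, a' i, b i, b' i` to equal `2`,
so `d` has support at most `π(0) + 4e < n/3 + n/3 ≤ n - π(0) = |supp c|`, contradicting the
minimality of `c`.
-/

open Finset

structure IsGoodEntry (c p q : ℤ) : Prop where
  left_mem : p ∈ Icc 0 2
  right_mem : q ∈ Icc 0 2
  sub_eq : p - q = c
  of_eq_zero : c = 0 → (p = 0 ∧ q = 0) ∨ (p = 1 ∧ q = 1)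

namespace IsGoodEntry

variable {c p q p' q' : ℤ}

theorem sub_mem_Icc (h : IsGoodEntry c p q) (h' : IsGoodEntry c p' q') :
    p - p' ∈ Icc (-1) 1 := by
  obtain ⟨hp, hq, hpq, h0⟩ := h
  obtain ⟨hp', hq', hpq', h0'⟩ := h'
  simp only [mem_Icc] at *
  omega

theorem eq_zero_or_eq_two_of_ne (h : IsGoodEntry c p q) (h' : IsGoodEntry c p' q')
    (hne : p ≠ p') : c = 0 ∨ p = 2 ∨ p' = 2 ∨ q = 2 ∨ q' = 2 := by
  obtain ⟨hp, hq, hpq, -⟩ := h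
  obtain ⟨hp', hq', hpq', -⟩ := h'
  simp only [mem_Icc] at *
  omega

end IsGoodEntry

theorem fst_ne_of_ne_of_sub_eq_sub {α : Type*} [AddGroup α] {a b a' b' : α}
    (hne : (a, b) ≠ (a', b')) (hsub : a - b = a' - b') : a ≠ a' :=
  fun h => hne (Prod.ext h (by rwa [h, sub_right_inj] at hsub))

theorem card_filter_sub_ne_zero_le {ι : Type*} [Fintype ι] [DecidableEq ι] {a b a' b' c : ι → ℤ}
    (h : ∀ i, IsGoodEntry (c i) (a i) (b i)) (h' : ∀ i, IsGoodEntry (c i) (a' i) (b' i)) :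
    #{i | (a - a') i ≠ 0} ≤
      #{i | c i = 0} + #{i | a i = 2} + #{i | a' i = 2} + #{i | b i = 2} + #{i | b' i = 2} := by
  calc #{i | (a - a') i ≠ 0}
      ≤ #(({i | c i = 0} : Finset ι) ∪ ({i | a i = 2} : Finset ι) ∪ ({i | a' i = 2} : Finset ι) ∪
          ({i | b i = 2} : Finset ι) ∪ ({i | b' i = 2} : Finset ι)) := by
        refine card_le_card fun i hi => ?_
        simp only [mem_filter, mem_univ, true_and, mem_union, Pi.sub_apply, sub_ne_zero] at hi ⊢
        have := (h i).eq_zero_or_eq_two_of_ne (h' i) hi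
        tauto
    _ ≤ _ := by
        grw [card_union_le, card_union_le, card_union_le, card_union_le]

theorem stmt_8_general (n : ℕ)
    (x c : Fin n → ℤ)
    (hmin : ∀ c' : Fin n → ℤ, (∀ i, c' i ∈ Finset.Icc (-1 : ℤ) 1) → c' ≠ 0 →
      (∑ i, c' i * x i = 0) →
      (Finset.univ.filter fun i => c i ≠ 0).card ≤
        (Finset.univ.filter fun i => c' i ≠ 0).card)
    (π : ℤ → ℕ) (hπ : ∀ z, π z = (Finset.univ.filter fun i => c i = z).card)
    (hπ0 : (π 0 : ℝ) ≤ (n : ℝ) / 3)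
    (e : ℕ) (he : (e : ℝ) < (n : ℝ) / 12)
    (a b a' b' : Fin n → ℤ)
    (haIcc : ∀ i, a i ∈ Finset.Icc (0 : ℤ) 2)
    (hbIcc : ∀ i, b i ∈ Finset.Icc (0 : ℤ) 2)
    (ha2 : (Finset.univ.filter fun i => a i = 2).card = e)
    (hb2 : (Finset.univ.filter fun i => b i = 2).card = e)
    (hab : a - b = c)
    (h0 : ∀ i, c i = 0 → (a i = 0 ∧ b i = 0) ∨ (a i = 1 ∧ b i = 1))
    (haIcc' : ∀ i, a' i ∈ Finset.Icc (0 : ℤ) 2)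
    (hbIcc' : ∀ i, b' i ∈ Finset.Icc (0 : ℤ) 2)
    (ha2' : (Finset.univ.filter fun i => a' i = 2).card = e)
    (hb2' : (Finset.univ.filter fun i => b' i = 2).card = e)
    (hab' : a' - b' = c)
    (h0' : ∀ i, c i = 0 → (a' i = 0 ∧ b' i = 0) ∨ (a' i = 1 ∧ b' i = 1))
    (hpairne : (a, b) ≠ (a', b')) :
    ∑ i, a i * x i ≠ ∑ i, a' i * x i := by
  intro heq
  have hgood i : IsGoodEntry (c i) (a i) (b i) := ⟨haIcc i, hbIcc i, congrFun hab i, h0 i⟩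
  have hgood' i : IsGoodEntry (c i) (a' i) (b' i) := ⟨haIcc' i, hbIcc' i, congrFun hab' i, h0' i⟩
  have hne : a - a' ≠ 0 :=
    sub_ne_zero.2 (fst_ne_of_ne_of_sub_eq_sub hpairne (hab.trans hab'.symm))
  have hminimal := hmin (a - a') (fun i => (hgood i).sub_mem_Icc (hgood' i)) hne
    (by simp [sub_mul, sum_sub_distrib, heq])
  have hsupp_small := card_filter_sub_ne_zero_le hgood hgood'
  have hsplit := card_filter_add_card_filter_not (s := univ) (p := fun i => c i = 0)
  rw [card_univ, Fintype.card_fin] at hsplit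
  have h3π : 3 * π 0 ≤ n := by exact_mod_cast (by linarith : (3 * π 0 : ℝ) ≤ n)
  have h12e : 12 * e < n := by exact_mod_cast (by linarith : (12 * e : ℝ) < n)
  simp only [← hπ 0, ha2, hb2, ha2', hb2', ← ne_eq] at hsupp_small hsplit
  omega

/-- Perfect Mixing Dichotomy for Equal Subset Sum: for a minimal-support
solution c with π(0) ≤ n/3 and π(1) = π(−1), and 0 ≤ e < n/12, any two
distinct good solution pairs have different dot products with x. -/
theorem stmt_8 (n : ℕ) (hn : 0 < n) (hneven : Even n)
    (x c : Fin n → ℤ) (hc : ∀ i, c i ∈ Finset.Icc (-1 : ℤ) 1)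
    (hc0 : c ≠ 0) (hcx : ∑ i, c i * x i = 0)
    (hmin : ∀ c' : Fin n → ℤ, (∀ i, c' i ∈ Finset.Icc (-1 : ℤ) 1) → c' ≠ 0 →
      (∑ i, c' i * x i = 0) →
      (Finset.univ.filter fun i => c i ≠ 0).card ≤
        (Finset.univ.filter fun i => c' i ≠ 0).card)
    (π : ℤ → ℕ) (hπ : ∀ z, π z = (Finset.univ.filter fun i => c i = z).card)
    (hπ0 : (π 0 : ℝ) ≤ (n : ℝ) / 3) (hbal : π 1 = π (-1))
    (e : ℕ) (he : (e : ℝ) < (n : ℝ) / 12)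
    (a b a' b' : Fin n → ℤ)
    (haIcc : ∀ i, a i ∈ Finset.Icc (0 : ℤ) 2)
    (hbIcc : ∀ i, b i ∈ Finset.Icc (0 : ℤ) 2)
    (ha1 : (Finset.univ.filter fun i => a i = 1).card = n / 2)
    (hb1 : (Finset.univ.filter fun i => b i = 1).card = n / 2)
    (ha2 : (Finset.univ.filter fun i => a i = 2).card = e)
    (hb2 : (Finset.univ.filter fun i => b i = 2).card = e)
    (hab : a - b = c)
    (h0 : ∀ i, c i = 0 → (a i = 0 ∧ b i = 0) ∨ (a i = 1 ∧ b i = 1))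
    (haIcc' : ∀ i, a' i ∈ Finset.Icc (0 : ℤ) 2)
    (hbIcc' : ∀ i, b' i ∈ Finset.Icc (0 : ℤ) 2)
    (ha1' : (Finset.univ.filter fun i => a' i = 1).card = n / 2)
    (hb1' : (Finset.univ.filter fun i => b' i = 1).card = n / 2)
    (ha2' : (Finset.univ.filter fun i => a' i = 2).card = e)
    (hb2' : (Finset.univ.filter fun i => b' i = 2).card = e)
    (hab' : a' - b' = c)
    (h0' : ∀ i, c i = 0 → (a' i = 0 ∧ b' i = 0) ∨ (a' i = 1 ∧ b' i = 1))
    (hpairne : (a, b) ≠ (a', b')) :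
    ∑ i, a i * x i ≠ ∑ i, a' i * x i :=
  stmt_8_general n x c hmin π hπ hπ0 e he a b a' b' haIcc hbIcc ha2 hb2 hab h0 haIcc' hbIcc' ha2'
    hb2' hab' h0' hpairne
end

section
/- Let U be a finite index set of size m, and let a, b ∈ [0:2]^U satisfy a − b ∈ [-1:1]^U (i.e., |a_j − b_j| ≤ 1 for all j ∈ U). Suppose #a^{−1}(2) = #b^{−1}(2) = E and #a^{−1}(1) = #b^{−1}(1) = m/2 for integers E and m/2, and let s be an integer with E ≤ s ≤ m/2 + E. Then the number of pairs (L, R) of subsets of U with |L| = |R| = s such that a^{−1}(2) ⊆ L, b^{−1}(0) ∩ L = ∅, b^{−1}(2) ⊆ R, and a^{−1}(0) ∩ R = ∅ equals C(m/2, s − E)², where C(·,·) denotes the binomial coefficient. -/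
/-!
The conditions on `L` and on `R` are independent, so the count factors. Those on `L` say
`a⁻¹(2) ⊆ L ⊆ b⁻¹({1, 2})`; this interval is nonempty because `|a_j - b_j| ≤ 1`, and its ends
differ by `#b⁻¹(1) + #b⁻¹(2) - #a⁻¹(2) = m/2` elements, so it holds `C(m/2, s - E)` sets of size
`s`. The same holds for `R` with `a` and `b` exchanged.
-/

open Finset

theorem Finset.ncard_card_eq_subset_subset {ι : Type*} [DecidableEq ι] {A B : Finset ι}
    (hAB : A ⊆ B) {s : ℕ} (hs : #A ≤ s) :
    {L : Finset ι | #L = s ∧ A ⊆ L ∧ L ⊆ B}.ncard = (#B - #A).choose (s - #A) := by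
  rw [← card_sdiff_of_subset hAB, ← card_powersetCard, ← Set.ncard_coe_finset]
  refine Set.ncard_congr (fun L _ => L \ A) ?_ ?_ ?_
  · rintro L ⟨hcard, hAL, hLB⟩
    rw [mem_coe, mem_powersetCard, card_sdiff_of_subset hAL, hcard]
    exact ⟨sdiff_subset_sdiff hLB le_rfl, rfl⟩
  · rintro L L' ⟨-, hAL, -⟩ ⟨-, hAL', -⟩ h
    rw [← sdiff_union_of_subset hAL, ← sdiff_union_of_subset hAL', h]
  · intro D hD
    rw [mem_coe, mem_powersetCard] at hD
    have hdisj : Disjoint D A := disjoint_of_subset_left hD.1 sdiff_disjoint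
    refine ⟨D ∪ A, ⟨?_, subset_union_right, union_subset (hD.1.trans sdiff_subset) hAB⟩,
      union_sdiff_cancel_right hdisj⟩
    rw [card_union_of_disjoint hdisj, hD.2, Nat.sub_add_cancel hs]

lemma card_filter_ne_zero_of_mem_Icc {ι : Type*} [Fintype ι] [DecidableEq ι] (b : ι → ℤ)
    (hb : ∀ j, b j ∈ Icc (0 : ℤ) 2) :
    #{j | b j ≠ 0} = #{j | b j = 1} + #{j | b j = 2} := by
  rw [← card_union_of_disjoint (disjoint_filter.2 fun _ _ h => by omega), ← filter_or]
  congr 1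
  ext j
  have := mem_Icc.1 (hb j)
  simp only [mem_filter, mem_univ, true_and]
  omega

lemma ncard_certificate_side {ι : Type*} [Fintype ι] [DecidableEq ι] (a b : ι → ℤ) {s : ℕ}
    (hb : ∀ j, b j ∈ Icc (0 : ℤ) 2) (hab : ∀ j, a j = 2 → b j ≠ 0)
    (h2 : #{j | a j = 2} = #{j | b j = 2}) (hs : #{j | a j = 2} ≤ s) :
    {L : Finset ι | #L = s ∧ (∀ j, a j = 2 → j ∈ L) ∧ ∀ j ∈ L, b j ≠ 0}.ncard =
      (#{j | b j = 1}).choose (s - #{j | a j = 2}) := by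
  have hsub : (univ.filter fun j => a j = 2) ⊆ univ.filter fun j => b j ≠ 0 := fun j hj => by
    simp only [mem_filter, mem_univ, true_and] at hj ⊢
    exact hab j hj
  have hset : {L : Finset ι | #L = s ∧ (∀ j, a j = 2 → j ∈ L) ∧ ∀ j ∈ L, b j ≠ 0} =
      {L : Finset ι | #L = s ∧ (univ.filter fun j => a j = 2) ⊆ L ∧
        L ⊆ univ.filter fun j => b j ≠ 0} := by
    ext L
    simp [subset_iff]
  rw [hset, Finset.ncard_card_eq_subset_subset hsub hs,
    card_filter_ne_zero_of_mem_Icc b hb, h2, Nat.add_sub_cancel]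

theorem stmt_10_general (ι : Type*) [Fintype ι] [DecidableEq ι] (m E s : ℕ)
    (a b : ι → ℤ)
    (ha : ∀ j, a j ∈ Finset.Icc (0 : ℤ) 2)
    (hb : ∀ j, b j ∈ Finset.Icc (0 : ℤ) 2)
    (hcompat : ∀ j, a j - b j ∈ Finset.Icc (-1 : ℤ) 1)
    (ha2 : (Finset.univ.filter fun j => a j = 2).card = E)
    (hb2 : (Finset.univ.filter fun j => b j = 2).card = E)
    (ha1 : (Finset.univ.filter fun j => a j = 1).card = m / 2)
    (hb1 : (Finset.univ.filter fun j => b j = 1).card = m / 2)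
    (hsE : E ≤ s) :
    Set.ncard {LR : Finset ι × Finset ι |
        LR.1.card = s ∧ LR.2.card = s ∧
        (∀ j, a j = 2 → j ∈ LR.1) ∧ (∀ j ∈ LR.1, b j ≠ 0) ∧
        (∀ j, b j = 2 → j ∈ LR.2) ∧ (∀ j ∈ LR.2, a j ≠ 0)} =
      Nat.choose (m / 2) (s - E) ^ 2 := by
  have hab : ∀ j, a j = 2 → b j ≠ 0 := fun j h => by have := mem_Icc.1 (hcompat j); omega
  have hba : ∀ j, b j = 2 → a j ≠ 0 := fun j h => by have := mem_Icc.1 (hcompat j); omega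
  have hprod : {LR : Finset ι × Finset ι |
        LR.1.card = s ∧ LR.2.card = s ∧
        (∀ j, a j = 2 → j ∈ LR.1) ∧ (∀ j ∈ LR.1, b j ≠ 0) ∧
        (∀ j, b j = 2 → j ∈ LR.2) ∧ (∀ j ∈ LR.2, a j ≠ 0)} =
      {L : Finset ι | #L = s ∧ (∀ j, a j = 2 → j ∈ L) ∧ ∀ j ∈ L, b j ≠ 0} ×ˢ
      {R : Finset ι | #R = s ∧ (∀ j, b j = 2 → j ∈ R) ∧ ∀ j ∈ R, a j ≠ 0} := by
    ext ⟨L, R⟩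
    simp only [Set.mem_ofPred_eq, Set.mem_prod]
    tauto
  rw [hprod, Set.ncard_prod,
    ncard_certificate_side a b hb hab (ha2.trans hb2.symm) (ha2 ▸ hsE),
    ncard_certificate_side b a ha hba (hb2.trans ha2.symm) (hb2 ▸ hsE), ha1, hb1, ha2, hb2, sq]

/-- Number of joint certificates for a compatible pair (a, b): the number of
pairs (L, R) of s-element subsets with a⁻¹(2) ⊆ L, b⁻¹(0) ∩ L = ∅,
b⁻¹(2) ⊆ R, a⁻¹(0) ∩ R = ∅ equals C(m/2, s−E)². -/
theorem stmt_10 (ι : Type*) [Fintype ι] [DecidableEq ι] (m E s : ℕ)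
    (hm : Fintype.card ι = m) (hmeven : Even m)
    (a b : ι → ℤ)
    (ha : ∀ j, a j ∈ Finset.Icc (0 : ℤ) 2)
    (hb : ∀ j, b j ∈ Finset.Icc (0 : ℤ) 2)
    (hcompat : ∀ j, a j - b j ∈ Finset.Icc (-1 : ℤ) 1)
    (ha2 : (Finset.univ.filter fun j => a j = 2).card = E)
    (hb2 : (Finset.univ.filter fun j => b j = 2).card = E)
    (ha1 : (Finset.univ.filter fun j => a j = 1).card = m / 2)
    (hb1 : (Finset.univ.filter fun j => b j = 1).card = m / 2)
    (hsE : E ≤ s) (hs : s ≤ m / 2 + E) :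
    Set.ncard {LR : Finset ι × Finset ι |
        LR.1.card = s ∧ LR.2.card = s ∧
        (∀ j, a j = 2 → j ∈ LR.1) ∧ (∀ j ∈ LR.1, b j ≠ 0) ∧
        (∀ j, b j = 2 → j ∈ LR.2) ∧ (∀ j ∈ LR.2, a j ≠ 0)} =
      Nat.choose (m / 2) (s - E) ^ 2 :=
  stmt_10_general ι m E s a b ha hb hcompat ha2 hb2 ha1 hb1 hsE
end

section
/- For every positive integer d, the strict inequality (d+1) < (d+1)^{2/(3(2d+1))} · (d!)^{4/(3(2d+1))} · (2d+1)^{1/2} holds over the reals. Equivalently, there exists a real γ > 0 (depending only on d) such that for all positive integers n, ((d+1)^n / ((d+1)^{2n/(3(2d+1))} · (d!)^{4n/(3(2d+1))})) · 2^{γn} < (2d+1)^{n/2}. -/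
lemma logfac (d : ℕ) : (d:ℝ) * Real.log d - d ≤ Real.log (d.factorial) := by
  induction d with
  | zero => simp
  | succ d ih =>
    have hstep : (d:ℝ) * Real.log (d+1) ≤ (d:ℝ) * Real.log d + 1 := by
      rcases Nat.eq_zero_or_pos d with h | h
      · subst h; simp
      · have hd0 : (0:ℝ) < d := by exact_mod_cast h
        have h1 : Real.log ((d+1)/d) ≤ (d+1)/d - 1 :=
          Real.log_le_sub_one_of_pos (by positivity)
        have h2 : Real.log ((d+1)/(d:ℝ)) = Real.log (d+1) - Real.log d :=
          Real.log_div (by positivity) (ne_of_gt hd0)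
        have h3 : ((d:ℝ)+1)/d - 1 = 1/d := by field_simp; ring
        have h4 : Real.log ((d:ℝ)+1) - Real.log d ≤ 1/d := by rw [← h2, ← h3]; exact h1
        have := mul_le_mul_of_nonneg_left h4 hd0.le
        rw [mul_sub] at this
        have h5 : (d:ℝ) * (1/d) = 1 := by field_simp
        nlinarith
    have hfac : Real.log ((d+1).factorial) = Real.log (d+1) + Real.log (d.factorial) := by
      rw [Nat.factorial_succ]
      push_cast
      rw [Real.log_mul (by positivity) (by exact_mod_cast (Nat.factorial_pos d).ne')]
    rw [hfac]
    push_cast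
    nlinarith [ih]

lemma key (d : ℕ) (hd : 0 < d) :
    (d+1)^(12*d+2) < (d.factorial)^8 * (2*d+1)^(6*d+3) := by
  rcases lt_or_ge d 16 with h16 | h16
  · interval_cases d <;> norm_num [Nat.factorial]
  · -- large d: via logs
    have hd16 : (16:ℝ) ≤ (d:ℝ) := by exact_mod_cast h16
    have hdpos : (0:ℝ) < d := by linarith
    have hx : (0:ℝ) < (d:ℝ)+1 := by linarith
    have hy : (0:ℝ) < 2*(d:ℝ)+1 := by linarith
    have hF : (0:ℝ) < (d.factorial : ℝ) := by exact_mod_cast d.factorial_pos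
    set Ld := Real.log d with hLd_def
    set L2 := Real.log 2 with hL2_def
    have hL2 : (0.6931471803:ℝ) < L2 := Real.log_two_gt_d9
    have hLd16 : 4*L2 ≤ Ld := by
      have : Real.log 16 ≤ Real.log d := Real.log_le_log (by norm_num) hd16
      have h16e : Real.log 16 = 4 * L2 := by
        rw [show (16:ℝ) = 2^4 by norm_num, Real.log_pow]; push_cast; ring
      linarith
    have hLx : Real.log ((d:ℝ)+1) ≤ Ld + 1/16 := by
      have h1 : Real.log (((d:ℝ)+1)/d) ≤ ((d:ℝ)+1)/d - 1 :=
        Real.log_le_sub_one_of_pos (by positivity)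
      have h2 : Real.log (((d:ℝ)+1)/d) = Real.log ((d:ℝ)+1) - Ld :=
        Real.log_div (by positivity) (ne_of_gt hdpos)
      have h3 : ((d:ℝ)+1)/d - 1 = 1/d := by field_simp; ring
      have h4 : (1:ℝ)/d ≤ 1/16 := by
        apply div_le_div_of_nonneg_left <;> linarith
      linarith [h2 ▸ (h3 ▸ h1)]
    have hLy : L2 + Ld ≤ Real.log (2*(d:ℝ)+1) := by
      have h1 : Real.log (2*(d:ℝ)) ≤ Real.log (2*(d:ℝ)+1) :=
        Real.log_le_log (by positivity) (by linarith)
      have h2 : Real.log (2*(d:ℝ)) = L2 + Ld := Real.log_mul (by norm_num) (ne_of_gt hdpos)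
      linarith
    have hLF : (d:ℝ)*Ld - d ≤ Real.log (d.factorial) := logfac d
    have hlog : ((12*d+2 : ℕ):ℝ) * Real.log ((d:ℝ)+1) <
        8 * Real.log (d.factorial) + ((6*d+3 : ℕ):ℝ) * Real.log (2*(d:ℝ)+1) := by
      push_cast
      have e1 : (12*(d:ℝ)+2) * Real.log ((d:ℝ)+1) ≤ (12*(d:ℝ)+2) * (Ld + 1/16) :=
        mul_le_mul_of_nonneg_left hLx (by linarith)
      have e2 : (6*(d:ℝ)+3) * (L2 + Ld) ≤ (6*(d:ℝ)+3) * Real.log (2*(d:ℝ)+1) :=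
        mul_le_mul_of_nonneg_left hLy (by linarith)
      nlinarith [mul_le_mul_of_nonneg_left hLd16 (by linarith : (0:ℝ) ≤ 2*(d:ℝ)),
        mul_lt_mul_of_pos_left hL2 hdpos]
    have hcast : ((((d:ℕ)+1)^(12*d+2) : ℕ) : ℝ) < (((d.factorial)^8 * (2*d+1)^(6*d+3) : ℕ) : ℝ) := by
      push_cast
      rw [← Real.log_lt_log_iff (by positivity) (by positivity)]
      rw [Real.log_pow, Real.log_mul (by positivity) (by positivity), Real.log_pow, Real.log_pow]
      push_cast
      push_cast at hlog
      convert hlog using 2 <;> push_cast <;> ring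
    exact_mod_cast hcast

/-- For every positive integer d:
(d+1) < (d+1)^{2/(3(2d+1))} · (d!)^{4/(3(2d+1))} · (2d+1)^{1/2}, and
equivalently there is γ > 0 with
((d+1)^n / ((d+1)^{2n/(3(2d+1))} (d!)^{4n/(3(2d+1))})) · 2^{γn} < (2d+1)^{n/2}
for all positive integers n. -/
theorem stmt_13 (d : ℕ) (hd : 0 < d) :
    ((d : ℝ) + 1) <
      ((d : ℝ) + 1) ^ ((2 : ℝ) / (3 * (2 * (d : ℝ) + 1))) *
        ((Nat.factorial d : ℝ)) ^ ((4 : ℝ) / (3 * (2 * (d : ℝ) + 1))) *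
        (2 * (d : ℝ) + 1) ^ ((1 : ℝ) / 2) ∧
    ∃ γ : ℝ, 0 < γ ∧ ∀ n : ℕ, 0 < n →
      ((d : ℝ) + 1) ^ (n : ℝ) /
          (((d : ℝ) + 1) ^ (2 * (n : ℝ) / (3 * (2 * (d : ℝ) + 1))) *
            ((Nat.factorial d : ℝ)) ^ (4 * (n : ℝ) / (3 * (2 * (d : ℝ) + 1)))) *
          (2 : ℝ) ^ (γ * (n : ℝ)) <
        (2 * (d : ℝ) + 1) ^ ((n : ℝ) / 2) := by
  have hx : (0:ℝ) < (d:ℝ)+1 := by positivity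
  have hy : (0:ℝ) < 2*(d:ℝ)+1 := by positivity
  have hF : (0:ℝ) < (d.factorial : ℝ) := by exact_mod_cast d.factorial_pos
  set t : ℝ := 3 * (2 * (d:ℝ) + 1) with ht_def
  have ht : (0:ℝ) < t := by positivity
  set c1 : ℝ := ((d:ℝ)+1) ^ ((2:ℝ)/t) with hc1_def
  set c2 : ℝ := (d.factorial : ℝ) ^ ((4:ℝ)/t) with hc2_def
  set b : ℝ := (2*(d:ℝ)+1) ^ ((1:ℝ)/2) with hb_def
  have hc1 : 0 < c1 := Real.rpow_pos_of_pos hx _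
  have hc2 : 0 < c2 := Real.rpow_pos_of_pos hF _
  have hb : 0 < b := Real.rpow_pos_of_pos hy _
  set m : ℕ := 12*d+6 with hm_def
  have hmc : ((m:ℕ):ℝ) = 2*t := by rw [hm_def]; push_cast; ring
  -- Part 1
  have part1 : ((d:ℝ)+1) < c1 * c2 * b := by
    apply lt_of_pow_lt_pow_left₀ m (by positivity)
    have e1 : c1 ^ m = ((d:ℝ)+1) ^ (4:ℕ) := by
      rw [hc1_def, ← Real.rpow_natCast (((d:ℝ)+1) ^ ((2:ℝ)/t)) m, ← Real.rpow_mul hx.le]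
      rw [show (2:ℝ)/t * (m:ℝ) = 4 by rw [hmc]; field_simp; ring]
      rw [show (4:ℝ) = ((4:ℕ):ℝ) by norm_num, Real.rpow_natCast]
    have e2 : c2 ^ m = (d.factorial : ℝ) ^ (8:ℕ) := by
      rw [hc2_def, ← Real.rpow_natCast ((d.factorial:ℝ) ^ ((4:ℝ)/t)) m, ← Real.rpow_mul hF.le]
      rw [show (4:ℝ)/t * (m:ℝ) = 8 by rw [hmc]; field_simp; ring]
      rw [show (8:ℝ) = ((8:ℕ):ℝ) by norm_num, Real.rpow_natCast]
    have e3 : b ^ m = (2*(d:ℝ)+1) ^ (6*d+3:ℕ) := by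
      rw [hb_def, ← Real.rpow_natCast ((2*(d:ℝ)+1) ^ ((1:ℝ)/2)) m, ← Real.rpow_mul hy.le]
      rw [show (1:ℝ)/2 * (m:ℝ) = ((6*d+3:ℕ):ℝ) by rw [hmc, ht_def]; push_cast; ring]
      rw [Real.rpow_natCast]
    rw [mul_pow, mul_pow, e1, e2, e3]
    have hk := key d hd
    have hkR : ((d:ℝ)+1) ^ (12*d+2:ℕ) < (d.factorial:ℝ) ^ (8:ℕ) * (2*(d:ℝ)+1) ^ (6*d+3:ℕ) := by
      exact_mod_cast hk
    calc ((d:ℝ)+1) ^ m = ((d:ℝ)+1)^(4:ℕ) * ((d:ℝ)+1)^(12*d+2:ℕ) := by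
          rw [← pow_add]; congr 1; omega
      _ < ((d:ℝ)+1)^(4:ℕ) * ((d.factorial:ℝ) ^ (8:ℕ) * (2*(d:ℝ)+1) ^ (6*d+3:ℕ)) :=
          (mul_lt_mul_iff_right₀ (by positivity)).mpr hkR
      _ = ((d:ℝ)+1)^(4:ℕ) * (d.factorial:ℝ) ^ (8:ℕ) * (2*(d:ℝ)+1) ^ (6*d+3:ℕ) := by ring
  refine ⟨part1, ?_⟩
  -- Part 2
  set a : ℝ := ((d:ℝ)+1) / (c1 * c2) with ha_def
  have ha : 0 < a := by positivity
  have hab : a < b := by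
    rw [ha_def, div_lt_iff₀ (by positivity)]
    calc ((d:ℝ)+1) < c1 * c2 * b := part1
      _ = b * (c1 * c2) := by ring
  have hr : 1 < b / a := (one_lt_div ha).mpr hab
  have hlogr : 0 < Real.log (b/a) := Real.log_pos hr
  have hlog2 : 0 < Real.log 2 := Real.log_pos (by norm_num)
  refine ⟨Real.log (b/a) / (2 * Real.log 2), by positivity, ?_⟩
  intro n hn
  set γ : ℝ := Real.log (b/a) / (2 * Real.log 2) with hγ_def
  have h2γ : (2:ℝ) ^ γ = (b/a) ^ ((1:ℝ)/2) := by
    rw [Real.rpow_def_of_pos (by norm_num : (0:ℝ) < 2),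
        Real.rpow_def_of_pos (by positivity : (0:ℝ) < b/a)]
    congr 1
    rw [hγ_def]; field_simp
  have hkey : a * (2:ℝ) ^ γ < b := by
    apply lt_of_pow_lt_pow_left₀ 2 hb.le
    have hsq : ((b/a) ^ ((1:ℝ)/2)) ^ (2:ℕ) = b/a := by
      rw [← Real.rpow_natCast ((b/a) ^ ((1:ℝ)/2)) 2, ← Real.rpow_mul (by positivity)]
      norm_num
    rw [mul_pow, h2γ, hsq]
    have : a^(2:ℕ) * (b/a) = a * b := by field_simp
    rw [this]
    nlinarith
  -- rewrite the goal in pow n form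
  have g1 : ((d:ℝ)+1) ^ ((n:ℕ):ℝ) = (((d:ℝ)+1)) ^ (n:ℕ) := Real.rpow_natCast _ n
  have g2 : ((d:ℝ)+1) ^ (2 * (n:ℝ) / t) = c1 ^ (n:ℕ) := by
    rw [hc1_def, show 2 * (n:ℝ) / t = (2:ℝ)/t * (n:ℝ) by ring, Real.rpow_mul hx.le,
        Real.rpow_natCast]
  have g3 : (d.factorial:ℝ) ^ (4 * (n:ℝ) / t) = c2 ^ (n:ℕ) := by
    rw [hc2_def, show 4 * (n:ℝ) / t = (4:ℝ)/t * (n:ℝ) by ring, Real.rpow_mul hF.le,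
        Real.rpow_natCast]
  have g4 : (2:ℝ) ^ (γ * (n:ℝ)) = ((2:ℝ)^γ) ^ (n:ℕ) := by
    rw [Real.rpow_mul (by norm_num : (0:ℝ) ≤ 2), Real.rpow_natCast]
  have g5 : (2*(d:ℝ)+1) ^ ((n:ℝ)/2) = b ^ (n:ℕ) := by
    rw [hb_def, show (n:ℝ)/2 = (1:ℝ)/2 * (n:ℝ) by ring, Real.rpow_mul hy.le,
        Real.rpow_natCast]
  rw [g1, g2, g3, g4, g5]
  have : ((d:ℝ)+1) ^ (n:ℕ) / (c1 ^ (n:ℕ) * c2 ^ (n:ℕ)) * ((2:ℝ)^γ) ^ (n:ℕ)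
      = (a * (2:ℝ)^γ) ^ (n:ℕ) := by
    rw [mul_pow, ha_def, div_pow, mul_pow]
  rw [this]
  exact pow_lt_pow_left₀ hkey (by positivity) hn.ne'
end

section
/- For all real numbers α₀ ≥ 0 and α₁ ≥ 0 with α₀ + 2α₁ ≤ 1, the following holds: min{ (1/2) · H(α₀, α₁, α₁, (1 − α₀ − 2α₁)/2, (1 − α₀ − 2α₁)/2), log₂(3) · (1 − α₀) − 2α₁ } ≤ 1.108, where H(p₁, …, p₅) = Σ_i (−p_i log₂ p_i) is the base-2 entropy of a probability vector (with the convention 0 · log₂ 0 = 0). -/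
/-- Pointwise Gibbs inequality: `-x log x ≤ -x log q + (q - x)`. -/
lemma gibbs_pt (x q : ℝ) (hx : 0 ≤ x) (hq : 0 < q) :
    -(x * Real.log x) ≤ -(x * Real.log q) + (q - x) := by
  rcases hx.eq_or_lt with h | h
  · rw [← h]; simpa using hq.le
  · have h1 : Real.log (q / x) ≤ q / x - 1 :=
      Real.log_le_sub_one_of_pos (div_pos hq h)
    rw [Real.log_div (ne_of_gt hq) (ne_of_gt h)] at h1
    have h2 := mul_le_mul_of_nonneg_left h1 h.le
    have h3 : x * (q / x - 1) = q - x := by field_simp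
    nlinarith [h2, h3]

/-- Worst-case exponent bound for Subset Balancing on C = [-2:2]:
min{ (1/2)·H(α₀, α₁, α₁, q, q), log₂3·(1−α₀) − 2α₁ } ≤ 1.108, where
q = (1−α₀−2α₁)/2 and H is the base-2 entropy. -/
theorem stmt_17 (α₀ α₁ : ℝ) (h0 : 0 ≤ α₀) (h1 : 0 ≤ α₁)
    (hsum : α₀ + 2 * α₁ ≤ 1) :
    min ((1 / 2) * (-(α₀ * Real.logb 2 α₀) + 2 * (-(α₁ * Real.logb 2 α₁)) +
        2 * (-(((1 - α₀ - 2 * α₁) / 2) * Real.logb 2 ((1 - α₀ - 2 * α₁) / 2)))))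
      (Real.logb 2 3 * (1 - α₀) - 2 * α₁) ≤ 1.108 := by
  set β : ℝ := (1 - α₀ - 2 * α₁) / 2 with hβdef
  have hβ : 0 ≤ β := by rw [hβdef]; linarith
  have hl2 : (0:ℝ) < Real.log 2 := Real.log_pos (by norm_num)
  set l2 : ℝ := Real.log 2 with hl2def
  -- log values of the reference distribution
  set K0 : ℝ := Real.log (2000/213) with hK0
  set K1 : ℝ := Real.log (5000/773) with hK1
  set K2 : ℝ := Real.log (20000/5843) with hK2
  -- Gibbs bounds
  have hq0 : Real.log ((213:ℝ)/2000) = -K0 := by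
    rw [hK0, ← Real.log_inv]; norm_num
  have hq1 : Real.log ((773:ℝ)/5000) = -K1 := by
    rw [hK1, ← Real.log_inv]; norm_num
  have hq2 : Real.log ((5843:ℝ)/20000) = -K2 := by
    rw [hK2, ← Real.log_inv]; norm_num
  have g0 := gibbs_pt α₀ (213/2000) h0 (by norm_num)
  have g1 := gibbs_pt α₁ (773/5000) h1 (by norm_num)
  have g2 := gibbs_pt β (5843/20000) hβ (by norm_num)
  rw [hq0] at g0
  rw [hq1] at g1
  rw [hq2] at g2
  -- vertex inequalities (huge integer comparisons)
  have hV1 : 685 * K0 ≤ 2216 * l2 := by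
    have h : ((2000/213 : ℝ)) ^ (685:ℕ) ≤ 2 ^ (2216:ℕ) := by
      rw [div_pow, div_le_iff₀ (by positivity)]
      exact_mod_cast (by decide +kernel : (2000:ℕ) ^ 685 ≤ 2 ^ 2216 * 213 ^ 685)
    have := Real.log_le_log (by positivity) h
    rw [Real.log_pow, Real.log_pow] at this
    rw [hK0, hl2def]; push_cast at this; linarith
  have hV2 : 685 * K1 + 630 * Real.log 3 ≤ 2846 * l2 := by
    have h : ((5000/773 : ℝ)) ^ (685:ℕ) * 3 ^ (630:ℕ) ≤ 2 ^ (2846:ℕ) := by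
      rw [div_pow, div_mul_eq_mul_div, div_le_iff₀ (by positivity)]
      exact_mod_cast (by decide +kernel : (5000:ℕ) ^ 685 * 3 ^ 630 ≤ 2 ^ 2846 * 773 ^ 685)
    have := Real.log_le_log (by positivity) h
    rw [Real.log_mul (by positivity) (by positivity), Real.log_pow, Real.log_pow,
      Real.log_pow] at this
    rw [hK1, hl2def]; push_cast at this; linarith
  have hV0 : 685 * K2 + 630 * Real.log 3 ≤ 2216 * l2 := by
    have h : ((20000/5843 : ℝ)) ^ (685:ℕ) * 3 ^ (630:ℕ) ≤ 2 ^ (2216:ℕ) := by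
      rw [div_pow, div_mul_eq_mul_div, div_le_iff₀ (by positivity)]
      exact_mod_cast (by decide +kernel : (20000:ℕ) ^ 685 * 3 ^ 630 ≤ 2 ^ 2216 * 5843 ^ 685)
    have := Real.log_le_log (by positivity) h
    rw [Real.log_mul (by positivity) (by positivity), Real.log_pow, Real.log_pow,
      Real.log_pow] at this
    rw [hK2, hl2def]; push_cast at this; linarith
  -- natural-log entropy
  set Hn : ℝ := -(α₀ * Real.log α₀) + 2 * (-(α₁ * Real.log α₁)) + 2 * (-(β * Real.log β))
    with hHn
  -- main linear bound
  have main : 685 * Hn + 630 * Real.log 3 * (1 - α₀) - 1260 * α₁ * l2 ≤ 2216 * l2 := by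
    have t0 : α₀ * (685 * K0) ≤ α₀ * (2216 * l2) :=
      mul_le_mul_of_nonneg_left hV1 h0
    have t1 : α₁ * (685 * K1 + 630 * Real.log 3) ≤ α₁ * (2846 * l2) :=
      mul_le_mul_of_nonneg_left hV2 h1
    have t2 : β * (685 * K2 + 630 * Real.log 3) ≤ β * (2216 * l2) :=
      mul_le_mul_of_nonneg_left hV0 hβ
    have hs : α₀ + 2 * α₁ + 2 * β = 1 := by rw [hβdef]; ring
    have h13 : 630 * Real.log 3 * (1 - α₀)
        = 1260 * (α₁ * Real.log 3) + 1260 * (β * Real.log 3) := by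
      rw [hβdef]; ring
    have h14 : α₀ * l2 + 2 * (α₁ * l2) + 2 * (β * l2) = l2 := by
      rw [hβdef]; ring
    linarith [g0, g1, g2, t0, t1, t2, hs, h13, h14]
  -- convert to logb form
  have hA : (1 / 2) * (-(α₀ * Real.logb 2 α₀) + 2 * (-(α₁ * Real.logb 2 α₁)) +
      2 * (-(β * Real.logb 2 β))) = Hn / (2 * l2) := by
    simp only [Real.logb, hHn, hl2def]
    field_simp
  have hB : Real.logb 2 3 * (1 - α₀) - 2 * α₁
      = (Real.log 3 * (1 - α₀) - 2 * α₁ * l2) / l2 := by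
    simp only [Real.logb, hl2def]
    field_simp
  have key : (137/200) * (Hn / (2 * l2)) +
      (63/200) * ((Real.log 3 * (1 - α₀) - 2 * α₁ * l2) / l2) ≤ 1.108 := by
    rw [← sub_nonneg]
    have heq : 1.108 - ((137/200) * (Hn / (2 * l2)) +
        (63/200) * ((Real.log 3 * (1 - α₀) - 2 * α₁ * l2) / l2))
        = (2216 * l2 - (685 * Hn + 630 * Real.log 3 * (1 - α₀) - 1260 * α₁ * l2))
          / (2000 * l2) := by
      field_simp
      ring
    rw [heq]
    apply div_nonneg (by linarith) (by positivity)
  calc min ((1 / 2) * (-(α₀ * Real.logb 2 α₀) + 2 * (-(α₁ * Real.logb 2 α₁)) +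
        2 * (-(β * Real.logb 2 β)))) (Real.logb 2 3 * (1 - α₀) - 2 * α₁)
      ≤ (137/200) * ((1 / 2) * (-(α₀ * Real.logb 2 α₀) + 2 * (-(α₁ * Real.logb 2 α₁)) +
          2 * (-(β * Real.logb 2 β)))) +
        (63/200) * (Real.logb 2 3 * (1 - α₀) - 2 * α₁) := by
        have m1 := min_le_left ((1 / 2) * (-(α₀ * Real.logb 2 α₀) +
          2 * (-(α₁ * Real.logb 2 α₁)) + 2 * (-(β * Real.logb 2 β))))
          (Real.logb 2 3 * (1 - α₀) - 2 * α₁)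
        have m2 := min_le_right ((1 / 2) * (-(α₀ * Real.logb 2 α₀) +
          2 * (-(α₁ * Real.logb 2 α₁)) + 2 * (-(β * Real.logb 2 β))))
          (Real.logb 2 3 * (1 - α₀) - 2 * α₁)
        linarith
    _ ≤ 1.108 := by rw [hA, hB]; exact key
end

section
/- For every real β with 0 ≤ β ≤ 1/2, the following holds: min{ (1/2) · H((1 − 2β)/4, β, (1 − 2β)/4, (1 − 2β)/4, β, (1 − 2β)/4), log₂(6)/3 + 1/2 − 2β/3 } ≤ 1.27955, where H(p₁, …, p₆) = Σ_i (−p_i log₂ p_i) is the base-2 entropy of a probability vector (with the convention 0 · log₂ 0 = 0). -/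
/-- Gibbs-type bound: `-x log₂ x ≤ x(-log r) + (r-x)`, scaled by `log 2`. -/
lemma gibbs (x r : ℝ) (hx : 0 ≤ x) (hr : 0 < r) :
    Real.log 2 * (-(x * Real.logb 2 x)) ≤ x * (-Real.log r) + (r - x) := by
  have hl2 : (0:ℝ) < Real.log 2 := Real.log_pos (by norm_num)
  rcases eq_or_lt_of_le hx with h|h
  · simp [← h]; positivity
  · have h1 : Real.log (r/x) ≤ r/x - 1 := Real.log_le_sub_one_of_pos (by positivity)
    rw [Real.log_div hr.ne' h.ne'] at h1
    have h2 : x * (Real.log r - Real.log x) ≤ r - x := by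
      have := mul_le_mul_of_nonneg_left h1 h.le
      calc x * (Real.log r - Real.log x) ≤ x * (r/x - 1) := this
        _ = r - x := by field_simp
    rw [Real.logb]
    have : Real.log 2 * -(x * (Real.log x / Real.log 2)) = -(x * Real.log x) := by
      field_simp
    rw [this]
    nlinarith [h2]

lemma logu : -(0.28281395:ℝ) ≤ Real.log (75366/100000) := by
  have h := Real.abs_log_sub_add_sum_range_le (x := 24634/100000)
    (by rw [abs_of_nonneg] <;> norm_num) 13
  rw [abs_le] at h
  have h2 := h.1
  rw [abs_of_nonneg (by norm_num)] at h2
  simp only [Finset.sum_range_succ, Finset.sum_range_zero] at h2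
  have : (1:ℝ) - 24634/100000 = 75366/100000 := by norm_num
  rw [this] at h2
  norm_num at h2 ⊢
  linarith

lemma logv : -(0.01474823:ℝ) ≤ Real.log (98536/100000) := by
  have h := Real.abs_log_sub_add_sum_range_le (x := 1464/100000)
    (by rw [abs_of_nonneg] <;> norm_num) 4
  rw [abs_le] at h
  have h2 := h.1
  rw [abs_of_nonneg (by norm_num)] at h2
  simp only [Finset.sum_range_succ, Finset.sum_range_zero] at h2
  have : (1:ℝ) - 1464/100000 = 98536/100000 := by norm_num
  rw [this] at h2
  norm_num at h2 ⊢
  linarith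

lemma log34 : Real.log ((3:ℝ)/4) ≤ -(0.28768205:ℝ) := by
  have h := Real.abs_log_sub_add_sum_range_le (x := (1:ℝ)/4)
    (by rw [abs_of_nonneg] <;> norm_num) 12
  rw [abs_le] at h
  have h2 := h.2
  rw [abs_of_nonneg (by norm_num)] at h2
  simp only [Finset.sum_range_succ, Finset.sum_range_zero] at h2
  have : (1:ℝ) - 1/4 = 3/4 := by norm_num
  rw [this] at h2
  norm_num at h2 ⊢
  linarith

/-- Worst-case exponent bound for Subset Balancing on C = [±3]:
min{ (1/2)·H(q, β, q, q, β, q), log₂6/3 + 1/2 − 2β/3 } ≤ 1.27955, where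
q = (1−2β)/4 and H is the base-2 entropy. -/
theorem stmt_18 (β : ℝ) (h0 : 0 ≤ β) (h1 : β ≤ 1 / 2) :
    min ((1 / 2) * (4 * (-(((1 - 2 * β) / 4) * Real.logb 2 ((1 - 2 * β) / 4))) +
        2 * (-(β * Real.logb 2 β))))
      (Real.logb 2 6 / 3 + 1 / 2 - 2 * β / 3) ≤ 1.27955 := by
  have hl : (0.6931471803:ℝ) < Real.log 2 := Real.log_two_gt_d9
  have hu : Real.log 2 < 0.6931471808 := Real.log_two_lt_d9
  have hl2 : (0:ℝ) < Real.log 2 := by linarith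
  rcases le_total β (12317/100000) with hb|hb
  · -- entropy branch
    refine le_trans (min_le_left _ _) ?_
    have hq0 : (0:ℝ) ≤ (1 - 2*β)/4 := by linarith
    have g1 := gibbs ((1 - 2*β)/4) (188415/1000000) hq0 (by norm_num)
    have g2 := gibbs β (12317/100000) h0 (by norm_num)
    have e1 : Real.log (188415/1000000:ℝ) = Real.log (75366/100000) - 2*Real.log 2 := by
      rw [show (188415/1000000:ℝ) = (75366/100000)/2^2 by norm_num,
        Real.log_div (by norm_num) (by norm_num), Real.log_pow]
      push_cast; ring
    have e2 : Real.log (12317/100000:ℝ) = Real.log (98536/100000) - 3*Real.log 2 := by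
      rw [show (12317/100000:ℝ) = (98536/100000)/2^3 by norm_num,
        Real.log_div (by norm_num) (by norm_num), Real.log_pow]
      push_cast; ring
    rw [e1] at g1
    rw [e2] at g2
    rw [← mul_le_mul_iff_right₀ hl2]
    nlinarith [g1, g2, hb, hl, hu, h0,
      mul_nonneg hq0 (show (0:ℝ) ≤ 0.28281395 + Real.log (75366/100000) by linarith [logu]),
      mul_nonneg h0 (show (0:ℝ) ≤ 0.01474823 + Real.log (98536/100000) by linarith [logv]),
      mul_nonneg hq0 (show (0:ℝ) ≤ 0.6931471808 - Real.log 2 by linarith),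
      mul_nonneg h0 (show (0:ℝ) ≤ 0.6931471808 - Real.log 2 by linarith)]
  · -- linear branch
    refine le_trans (min_le_right _ _) ?_
    have e6 : Real.log 6 = 3*Real.log 2 + Real.log ((3:ℝ)/4) := by
      rw [show (6:ℝ) = 2^3*(3/4) by norm_num,
        Real.log_mul (by norm_num) (by norm_num), Real.log_pow]
      push_cast; ring
    have hb6 : Real.logb 2 6 ≤ 3 - 0.28768205/0.6931471808 := by
      rw [Real.logb, e6, div_le_iff₀ hl2]
      nlinarith [log34, hu, hl]
    nlinarith [hb6, hb]
end
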